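/- arXiv:1108.5585 — 2 statements merged into one kernel-verified Lean document; each statement's English description precedes it below -/
import Mathlib

section
/- There exists a function C : ℕ → ℝ with C(k) ≥ 0 for all k, such that for all integers l and k with l ≥ k ≥ 0 and l ≥ 1, the inequality c(l,k) ≤ C(k)·2^{−l}·(l−1)!/(l−k)! holds. -/
open scoped Classical

/-- The constants `c(l,k)`: `c(l,0) = c(0,k) = 0`,
`c(1,k) = (2k²+14k)/((k+1)(k+2)(k+3)(k+4))` for `k ≥ 1`, and for `l > 1`, `k > 0`,
`c(l,k) = c(l,k-1)·(l+k-1)/(2l+k+2) + c(l-1,k)·(l-1)/(2l+k+2)`. -/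
noncomputable def c : ℕ → ℕ → ℝ
  | _, 0 => 0
  | 0, _ => 0
  | 1, k + 1 =>
      (2 * ((k : ℝ) + 1) ^ 2 + 14 * ((k : ℝ) + 1)) /
        (((k : ℝ) + 2) * ((k : ℝ) + 3) * ((k : ℝ) + 4) * ((k : ℝ) + 5))
  | l + 2, k + 1 =>
      c (l + 2) k * ((l : ℝ) + (k : ℝ) + 2) / (2 * (l : ℝ) + (k : ℝ) + 7) +
      c (l + 1) (k + 1) * ((l : ℝ) + 1) / (2 * (l : ℝ) + (k : ℝ) + 7)
termination_by l k => (l, k)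

lemma c_zero_right (l : ℕ) : c l 0 = 0 := by rw [c]

lemma c_zero_left (k : ℕ) : c 0 k = 0 := by
  cases k with
  | zero => exact c_zero_right 0
  | succ k => rw [c]; exact Nat.succ_ne_zero k

lemma c_one (k : ℕ) : c 1 (k + 1) =
    (2 * ((k : ℝ) + 1) ^ 2 + 14 * ((k : ℝ) + 1)) /
      (((k : ℝ) + 2) * ((k : ℝ) + 3) * ((k : ℝ) + 4) * ((k : ℝ) + 5)) := by
  rw [c]

lemma c_rec (l k : ℕ) : c (l + 2) (k + 1) =
    c (l + 2) k * ((l : ℝ) + (k : ℝ) + 2) / (2 * (l : ℝ) + (k : ℝ) + 7) +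
      c (l + 1) (k + 1) * ((l : ℝ) + 1) / (2 * (l : ℝ) + (k : ℝ) + 7) := by
  rw [c]


lemma step_ineq (x y p : ℝ) (hx : 0 ≤ x) (hy : 0 ≤ y) (hp : 0 < p) (m : ℕ) :
    (x+y+3)^m/(2*p) * ((x+y+3)/(2*x+y+8)) + (x+y+3)^(m+1)/p * ((x+1)/(2*x+y+8))
      ≤ (x+y+4)^(m+1)/(2*p) := by
  have hD : (0:ℝ) < 2*x+y+8 := by linarith
  have key : (x+y+3)^(m+1) ≤ (x+y+4)^(m+1) :=
    pow_le_pow_left₀ (by linarith) (by linarith) _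
  have ha : (0:ℝ) ≤ (x+y+3)^(m+1) := by positivity
  have key2 : (x+y+3)^(m+1) * (2*x+3) ≤ (x+y+4)^(m+1) * (2*x+y+8) :=
    mul_le_mul key (by linarith) (by linarith) (by positivity)
  have e : (x+y+3)^m/(2*p) * ((x+y+3)/(2*x+y+8)) + (x+y+3)^(m+1)/p * ((x+1)/(2*x+y+8))
      = ((x+y+3)^(m+1) * (2*x+3) / (2*x+y+8)) / (2*p) := by
    rw [pow_succ]
    field_simp
    ring
  rw [e]
  gcongr
  rw [div_le_iff₀ hD]
  exact key2

lemma c_main (l k : ℕ) : c l k ≤ ((l : ℝ) + k) ^ (k - 1) / 2 ^ l := by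
  induction l, k using c.induct with
  | case1 l =>
      rw [c_zero_right]; positivity
  | case2 k hk =>
      rw [c_zero_left]; positivity
  | case3 k =>
      rw [c_one]
      have hk : (0:ℝ) ≤ (k:ℝ) := Nat.cast_nonneg k
      have h1 : (2 * ((k : ℝ) + 1) ^ 2 + 14 * ((k : ℝ) + 1)) /
          (((k : ℝ) + 2) * ((k : ℝ) + 3) * ((k : ℝ) + 4) * ((k : ℝ) + 5)) ≤ 1 / 2 := by
        rw [div_le_div_iff₀ (by positivity) (by norm_num)]
        nlinarith [sq_nonneg ((k:ℝ)), sq_nonneg ((k:ℝ)+1), pow_le_pow_left₀ hk (le_refl (k:ℝ)) 2]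
      refine h1.trans ?_
      rw [pow_one]
      gcongr
      exact one_le_pow₀ (by push_cast; linarith)
  | case4 l k ih1 ih2 =>
      rw [show l.succ.succ = l + 2 from rfl, show k.succ = k + 1 from rfl, c_rec]
      have hx : (0:ℝ) ≤ (l:ℝ) := Nat.cast_nonneg l
      have hD : (0:ℝ) < 2*(l:ℝ) + (k:ℝ) + 7 := by positivity
      cases k with
      | zero =>
          rw [c_zero_right]
          push_cast
          simp only [Nat.add_sub_cancel, pow_zero]
          have h2 : c (l+1) 1 ≤ 1 / 2^(l+1) := by
            have := ih2
            simp only [Nat.add_sub_cancel, pow_zero] at this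
            exact this
          calc 0 * ((l:ℝ)+0+2) / (2*(l:ℝ)+0+7) + c (l+1) 1 * ((l:ℝ)+1) / (2*(l:ℝ)+0+7)
              = c (l+1) 1 * (((l:ℝ)+1) / (2*(l:ℝ)+0+7)) := by ring
            _ ≤ (1/2^(l+1)) * (((l:ℝ)+1) / (2*(l:ℝ)+0+7)) := by
                gcongr
            _ ≤ (1/2^(l+1)) * (1/2) := by
                have hq : ((l:ℝ)+1) / (2*(l:ℝ)+0+7) ≤ 1/2 := by
                  rw [div_le_div_iff₀ (by positivity) (by norm_num)]
                  linarith
                exact mul_le_mul_of_nonneg_left hq (by positivity)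
            _ = 1 / 2^(l+2) := by
                rw [pow_succ]
                ring
      | succ m =>
          have hy : (0:ℝ) ≤ (m:ℝ) := Nat.cast_nonneg m
          have hp : (0:ℝ) < (2:ℝ)^(l+1) := by positivity
          have ih1' : c (l+2) (m+1) ≤ ((l:ℝ)+(m:ℝ)+3)^m / 2^(l+2) := by
            refine ih1.trans_eq ?_
            rw [Nat.add_sub_cancel]
            push_cast
            ring_nf
          have ih2' : c (l+1) (m+1+1) ≤ ((l:ℝ)+(m:ℝ)+3)^(m+1) / 2^(l+1) := by
            refine ih2.trans_eq ?_
            rw [Nat.add_sub_cancel]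
            push_cast
            ring_nf
          have hc1 : (0:ℝ) ≤ ((l:ℝ) + ((m:ℕ)+1:ℕ) + 2) := by positivity
          calc c (l+2) (m+1) * ((l:ℝ) + ((m+1:ℕ):ℝ) + 2) / (2*(l:ℝ) + ((m+1:ℕ):ℝ) + 7)
                + c (l+1) (m+1+1) * ((l:ℝ)+1) / (2*(l:ℝ) + ((m+1:ℕ):ℝ) + 7)
              ≤ (((l:ℝ)+(m:ℝ)+3)^m / 2^(l+2)) * ((l:ℝ) + ((m+1:ℕ):ℝ) + 2) / (2*(l:ℝ) + ((m+1:ℕ):ℝ) + 7)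
                + (((l:ℝ)+(m:ℝ)+3)^(m+1) / 2^(l+1)) * ((l:ℝ)+1) / (2*(l:ℝ) + ((m+1:ℕ):ℝ) + 7) := by
                  gcongr <;> positivity
            _ = ((l:ℝ)+(m:ℝ)+3)^m/(2*2^(l+1)) * (((l:ℝ)+(m:ℝ)+3)/(2*(l:ℝ)+(m:ℝ)+8))
                + ((l:ℝ)+(m:ℝ)+3)^(m+1)/2^(l+1) * (((l:ℝ)+1)/(2*(l:ℝ)+(m:ℝ)+8)) := by
                  push_cast
                  field_simp
                  ring
            _ ≤ ((l:ℝ)+(m:ℝ)+4)^(m+1)/(2*2^(l+1)) := step_ineq (l:ℝ) (m:ℝ) _ hx hy hp m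
            _ = (((l+2:ℕ):ℝ) + ((m+1+1:ℕ):ℝ))^(m+1+1-1)/2^(l+2) := by
                  rw [Nat.add_sub_cancel]
                  push_cast
                  ring_nf

lemma nat_key (l j : ℕ) (hkl : j + 1 ≤ l) :
    (l + (j+1))^j ≤ (2*(j+1))^j * (l-1).descFactorial j := by
  rw [Nat.descFactorial_eq_prod_range]
  calc (l + (j+1))^j = ∏ _i ∈ Finset.range j, (l + (j+1)) := by
        rw [Finset.prod_const, Finset.card_range]
    _ ≤ ∏ i ∈ Finset.range j, (2*(j+1) * (l - 1 - i)) := ?_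
    _ = (2*(j+1))^j * ∏ i ∈ Finset.range j, (l - 1 - i) := by
        rw [Finset.prod_mul_distrib, Finset.prod_const, Finset.card_range]
  apply Finset.prod_le_prod'
  intro i hi
  rw [Finset.mem_range] at hi
  have h1 : l - 1 - i = l - (i+1) := by omega
  rw [h1]
  have h2 : l - (i+1) = l - (i+1) := rfl
  have h3 : i + 1 ≤ l := by omega
  have h4 : l = (l - (i+1)) + (i+1) := by omega
  set d := l - (i+1) with hd
  have hdj : j ≤ d + i := by omega
  calc l + (j+1) = d + i + j + 2 := by omega
    _ ≤ 2*(j+1)*d := by nlinarith [hdj, Nat.one_le_iff_ne_zero.mpr (show d ≠ 0 by omega)]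

/-- There is `C : ℕ → ℝ` with `C(k) ≥ 0` such that for all `l ≥ k ≥ 0` with `l ≥ 1`,
`c(l,k) ≤ C(k)·2^{−l}·(l−1)!/(l−k)!`. -/
theorem c_upper_bound :
    ∃ C : ℕ → ℝ, (∀ k : ℕ, 0 ≤ C k) ∧
      ∀ l k : ℕ, k ≤ l → 1 ≤ l →
        c l k ≤ C k * ((l - 1).factorial : ℝ) / (2 ^ l * ((l - k).factorial : ℝ)) := by
  refine ⟨fun k => (((2*k)^(k-1) : ℕ) : ℝ), fun k => Nat.cast_nonneg _, ?_⟩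
  intro l k hkl hl
  cases k with
  | zero =>
      rw [c_zero_right]
      positivity
  | succ j =>
      have hmain := c_main l (j+1)
      have hnat := nat_key l j hkl
      have hfact : (l-1).descFactorial j * (l - (j+1)).factorial = (l-1).factorial := by
        have h0 : j ≤ l - 1 := by omega
        have := Nat.factorial_mul_descFactorial h0
        have he : l - 1 - j = l - (j+1) := by omega
        rw [he] at this
        linarith [this]
      have hR : ((l:ℝ) + ((j+1:ℕ):ℝ))^((j+1) - 1) / 2^l
          ≤ (((2*(j+1))^((j+1)-1) : ℕ) : ℝ) * ((l - 1).factorial : ℝ) / (2 ^ l * ((l - (j+1)).factorial : ℝ)) := by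
        rw [Nat.add_sub_cancel, div_le_div_iff₀ (by positivity) (by positivity)]
        have hcast : ((l:ℝ) + ((j+1:ℕ):ℝ))^j = (((l + (j+1))^j : ℕ) : ℝ) := by push_cast; ring
        rw [hcast]
        have h1 : (((l + (j+1))^j : ℕ) : ℝ) * ((l - (j+1)).factorial : ℝ)
            ≤ (((2*(j+1))^j * (l-1).descFactorial j : ℕ) : ℝ) * ((l - (j+1)).factorial : ℝ) := by
          have : (0:ℝ) ≤ ((l - (j+1)).factorial : ℝ) := Nat.cast_nonneg _
          exact mul_le_mul_of_nonneg_right (by exact_mod_cast hnat) this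
        have h2 : (((2*(j+1))^j * (l-1).descFactorial j : ℕ) : ℝ) * ((l - (j+1)).factorial : ℝ)
            = (((2*(j+1))^j : ℕ) : ℝ) * ((l-1).factorial : ℝ) := by
          push_cast
          rw [mul_assoc]
          congr 1
          exact_mod_cast hfact
        nlinarith [mul_le_mul_of_nonneg_right (h1.trans_eq h2)
          (show (0:ℝ) ≤ 2^l by positivity)]
      exact hmain.trans hR
end

section
/- For every natural number N and every integer k ≥ 0, the series ∑_{l=1}^∞ l^N · c(l,k) converges. -/
open scoped Classical

lemma c_nonneg : ∀ l k, 0 ≤ c l k := by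
  intro l k
  induction l, k using c.induct with
  | case1 x => cases x <;> simp [c]
  | case2 x h =>
      cases x with
      | zero => simp [c]
      | succ n => simp only [c]; exact le_refl 0
  | case3 k =>
      simp only [c]
      positivity
  | case4 l k ih1 ih2 =>
      simp only [c]
      have h1 : (0:ℝ) < 2 * (l : ℝ) + (k : ℝ) + 7 := by positivity
      have h2 : (0:ℝ) ≤ (l : ℝ) + (k : ℝ) + 2 := by positivity
      have h3 : (0:ℝ) ≤ (l : ℝ) + 1 := by positivity
      positivity

lemma c_le : ∀ l k, c l k ≤ 3 ^ k * (3 / 4 : ℝ) ^ l := by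
  intro l k
  induction l, k using c.induct with
  | case1 x => cases x <;> · simp only [c]; positivity
  | case2 x h =>
      cases x with
      | zero => simp only [c]; positivity
      | succ n => simp only [c]; positivity
  | case3 k =>
      simp only [c]
      have hb : (2 * ((k : ℝ) + 1) ^ 2 + 14 * ((k : ℝ) + 1)) /
          (((k : ℝ) + 2) * ((k : ℝ) + 3) * ((k : ℝ) + 4) * ((k : ℝ) + 5)) ≤ 1 := by
        rw [div_le_one (by positivity)]
        nlinarith [sq_nonneg ((k:ℝ)), sq_nonneg ((k:ℝ)+1)]
      calc _ ≤ (1:ℝ) := hb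
        _ ≤ 3 ^ (k+1) * (3/4:ℝ) ^ (1:ℕ) := by
            have h3 : (1:ℝ) ≤ 3 ^ k := one_le_pow₀ (by norm_num)
            rw [pow_succ, pow_one]
            nlinarith
  | case4 l k ih1 ih2 =>
      simp only [c]
      have hd : (0:ℝ) < 2 * (l : ℝ) + (k : ℝ) + 7 := by positivity
      have hn1 := c_nonneg (l+2) k
      have hn2 := c_nonneg (l+1) (k+1)
      have hA : ((l : ℝ) + (k : ℝ) + 2) / (2 * (l : ℝ) + (k : ℝ) + 7) ≤ 1 := by
        rw [div_le_one hd]; linarith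
      have hB : ((l : ℝ) + 1) / (2 * (l : ℝ) + (k : ℝ) + 7) ≤ 1/2 := by
        rw [div_le_iff₀ hd]; linarith
      have hA0 : (0:ℝ) ≤ ((l : ℝ) + (k : ℝ) + 2) / (2 * (l : ℝ) + (k : ℝ) + 7) := by positivity
      have hB0 : (0:ℝ) ≤ ((l : ℝ) + 1) / (2 * (l : ℝ) + (k : ℝ) + 7) := by positivity
      have t1 : c (l + 2) k * ((l : ℝ) + (k : ℝ) + 2) / (2 * (l : ℝ) + (k : ℝ) + 7)
          ≤ 3 ^ k * (3/4:ℝ) ^ (l+2) := by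
        rw [mul_div_assoc]
        calc c (l + 2) k * (((l : ℝ) + (k : ℝ) + 2) / (2 * (l : ℝ) + (k : ℝ) + 7))
            ≤ (3 ^ k * (3/4:ℝ) ^ (l+2)) * 1 := by
              apply mul_le_mul ih1 hA hA0 (by positivity)
          _ = 3 ^ k * (3/4:ℝ) ^ (l+2) := by ring
      have t2 : c (l + 1) (k+1) * ((l : ℝ) + 1) / (2 * (l : ℝ) + (k : ℝ) + 7)
          ≤ 3 ^ (k+1) * (3/4:ℝ) ^ (l+1) * (1/2) := by
        rw [mul_div_assoc]
        apply mul_le_mul ih2 hB hB0 (by positivity)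
      have key : 3 ^ k * (3/4:ℝ) ^ (l+2) + 3 ^ (k+1) * (3/4:ℝ) ^ (l+1) * (1/2)
          = 3 ^ (k+1) * (3/4:ℝ) ^ (l+2) := by
        ring
      calc _ ≤ 3 ^ k * (3/4:ℝ) ^ (l+2) + 3 ^ (k+1) * (3/4:ℝ) ^ (l+1) * (1/2) :=
              add_le_add t1 t2
        _ = 3 ^ (k+1) * (3/4:ℝ) ^ (l+2) := key

/-- For every natural number `N` and every integer `k ≥ 0`, the series
`∑_{l=1}^∞ l^N·c(l,k)` converges. -/
theorem summable_pow_mul_c :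
    ∀ N k : ℕ, Summable (fun l : ℕ => (l : ℝ) ^ N * c l k) := by
  intro N k
  apply Summable.of_nonneg_of_le
    (fun l => mul_nonneg (by positivity) (c_nonneg l k))
    (fun l => ?_)
    (((summable_pow_mul_geometric_of_norm_lt_one N
        (r := (3/4:ℝ)) (by norm_num)).mul_left (3 ^ k)))
  · calc (l : ℝ) ^ N * c l k ≤ (l : ℝ) ^ N * (3 ^ k * (3/4:ℝ) ^ l) := by
          exact mul_le_mul_of_nonneg_left (c_le l k) (by positivity)
      _ = 3 ^ k * ((l:ℝ) ^ N * (3/4:ℝ) ^ l) := by ring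
end
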